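/- Let G be an expandable finite simple graph that has a perfect matching. Then η(G) = τ(Ḡ), the vertex cover number of the complement of G. -/

import Mathlib

open SimpleGraph

variable {V : Type*}

/-- `M` is a matching in `G`: a set of pairwise vertex-disjoint edges of `G`. -/
def IsMatchingIn (G : SimpleGraph V) (M : Finset (Sym2 V)) : Prop :=
  (∀ e ∈ M, e ∈ G.edgeSet) ∧
    ∀ e ∈ M, ∀ f ∈ M, e ≠ f → ∀ v : V, v ∈ e → v ∉ f

/-- `M` is a maximal matching in `G`: a matching not properly contained in another matching. -/
def IsMaximalMatchingIn (G : SimpleGraph V) (M : Finset (Sym2 V)) : Prop :=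
  IsMatchingIn G M ∧ ∀ M', IsMatchingIn G M' → M ⊆ M' → M' = M

/-- `M` saturates (covers) the vertex `v`. -/
def Sat (M : Finset (Sym2 V)) (v : V) : Prop := ∃ e ∈ M, v ∈ e

/-- The matching number `ν(G)`. -/
noncomputable def nuNum (G : SimpleGraph V) : ℕ :=
  sSup {n | ∃ M, IsMatchingIn G M ∧ M.card = n}

/-- The minimum maximal matching number `β(G)`. -/
noncomputable def betaNum (G : SimpleGraph V) : ℕ :=
  sInf {n | ∃ M, IsMaximalMatchingIn G M ∧ M.card = n}

/-- The matching gap `μ(G) = ν(G) - β(G)`. -/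
noncomputable def muGap (G : SimpleGraph V) : ℕ := nuNum G - betaNum G

/-- `M` covers the vertex set `S`. -/
def CoversSet (M : Finset (Sym2 V)) (S : Set V) : Prop := ∀ v ∈ S, Sat M v

/-- `S` is an equimatchable set in `G`: all maximal matchings of `G` covering `S`
have the same size. -/
def EquiSet (G : SimpleGraph V) (S : Set V) : Prop :=
  ∀ M M' : Finset (Sym2 V), IsMaximalMatchingIn G M → IsMaximalMatchingIn G M' →
    CoversSet M S → CoversSet M' S → M.card = M'.card

/-- The equimatchability defect `η(G)`: the minimum size of an equimatchable set in `G`. -/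
noncomputable def etaDefect (G : SimpleGraph V) : ℕ :=
  sInf {n | ∃ S : Set V, EquiSet G S ∧ S.ncard = n}

/-- The induced subgraph `G[S]` has a perfect matching: there is a matching of `G`
all of whose edges lie inside `S` and which saturates every vertex of `S`. -/
def HasPMOn (G : SimpleGraph V) (S : Set V) : Prop :=
  ∃ M : Finset (Sym2 V), IsMatchingIn G M ∧ (∀ e ∈ M, ∀ v : V, v ∈ e → v ∈ S) ∧
    ∀ v ∈ S, Sat M v

/-- `G` is expandable: for every two non-adjacent vertices `u`, `v`,
the graph `G - u - v` has a perfect matching. -/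
def Expandable (G : SimpleGraph V) : Prop :=
  ∀ u v : V, u ≠ v → ¬ G.Adj u v → HasPMOn G (Set.univ \ {u, v})

/-- The vertex cover number `τ(H)`. -/
noncomputable def tauNum (H : SimpleGraph V) : ℕ :=
  sInf {n | ∃ C : Set V, (∀ u v : V, H.Adj u v → u ∈ C ∨ v ∈ C) ∧ C.ncard = n}

/-!
If `S` is a vertex cover of `Gᶜ`, the vertices left unsaturated by a maximal matching covering `S`
lie outside `S`, so they are pairwise adjacent in `G` and maximality leaves at most one of them;
as `2 * #M` is even, this pins down `#M`. Conversely, if `u, v ∉ S` are non-adjacent in `G`, a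
perfect matching of `G - u - v` is maximal, covers `S`, and has one edge fewer than a perfect
matching of `G`. So the equimatchable sets of `G` are exactly the vertex covers of `Gᶜ`.
-/

open Finset

variable {G : SimpleGraph V} {M : Finset (Sym2 V)}

theorem IsMatchingIn.ncard_setOf_sat (hM : IsMatchingIn G M) :
    {v | Sat M v}.ncard = 2 * #M := by
  classical
  have hsat : {v | Sat M v} = ↑(M.biUnion Sym2.toFinset) := by
    ext v
    simp [Sat]
  have hdisj : (M : Set (Sym2 V)).PairwiseDisjoint Sym2.toFinset := fun e he f hf hne =>
    disjoint_left.2 fun v hve hvf =>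
      hM.2 e he f hf hne v (Sym2.mem_toFinset.1 hve) (Sym2.mem_toFinset.1 hvf)
  rw [hsat, Set.ncard_coe_finset, card_biUnion hdisj, mul_comm,
    sum_const_nat fun e he =>
      Sym2.card_toFinset_of_not_isDiag e (G.not_isDiag_of_mem_edgeSet (hM.1 e he))]

theorem IsMatchingIn.two_mul_card_eq_ncard (hM : IsMatchingIn G M) {S : Set V}
    (hin : ∀ e ∈ M, ∀ v : V, v ∈ e → v ∈ S) (hsat : ∀ v ∈ S, Sat M v) :
    2 * #M = S.ncard := by
  have hS : S = {v | Sat M v} :=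
    Set.ext fun v => ⟨hsat v, fun ⟨e, he, hve⟩ => hin e he v hve⟩
  rw [hS, hM.ncard_setOf_sat]

theorem IsMatchingIn.insert [DecidableEq V] (hM : IsMatchingIn G M) {a b : V}
    (hab : G.Adj a b) (ha : ¬ Sat M a) (hb : ¬ Sat M b) :
    IsMatchingIn G (insert s(a, b) M) := by
  have hfresh : ∀ f ∈ M, ∀ v : V, v ∈ s(a, b) → v ∉ f := by
    rintro f hf v hv hvf
    rcases Sym2.mem_iff.1 hv with rfl | rfl
    · exact ha ⟨f, hf, hvf⟩
    · exact hb ⟨f, hf, hvf⟩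
  refine ⟨fun e he => ?_, fun e he f hf hne v hve hvf => ?_⟩
  · rcases mem_insert.1 he with rfl | he
    exacts [hab, hM.1 e he]
  · rcases mem_insert.1 he with rfl | he <;> rcases mem_insert.1 hf with rfl | hf
    · exact hne rfl
    · exact hfresh f hf v hve hvf
    · exact hfresh e he v hvf hve
    · exact hM.2 e he f hf hne v hve hvf

theorem isMaximalMatchingIn_iff :
    IsMaximalMatchingIn G M ↔ IsMatchingIn G M ∧ ∀ a b, G.Adj a b → Sat M a ∨ Sat M b := by
  classical
  refine ⟨fun hM => ⟨hM.1, fun a b hab => ?_⟩, fun ⟨hM, hcov⟩ => ⟨hM, fun M' hM' hMM' => ?_⟩⟩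
  · by_contra! h
    have hnew : s(a, b) ∉ M := fun he => h.1 ⟨_, he, Sym2.mem_mk_left a b⟩
    exact hnew (hM.2 _ (hM.1.insert hab h.1 h.2) (subset_insert _ M) ▸ mem_insert_self _ M)
  · refine subset_antisymm (fun e he => ?_) hMM'
    by_contra heM
    induction e using Sym2.ind with
    | _ a b =>
      have key : ∀ v ∈ s(a, b), ¬ Sat M v := fun v hv ⟨f, hf, hvf⟩ =>
        hM'.2 _ he f (hMM' hf) (fun h => heM (h ▸ hf)) v hv hvf
      rcases hcov a b (hM'.1 _ he) with h | h
      exacts [key a (Sym2.mem_mk_left a b) h, key b (Sym2.mem_mk_right a b) h]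

theorem IsMatchingIn.isMaximalMatchingIn_of_isIndepSet (hM : IsMatchingIn G M) {I : Set V}
    (hI : G.IsIndepSet I) (hsat : ∀ v ∉ I, Sat M v) : IsMaximalMatchingIn G M := by
  refine isMaximalMatchingIn_iff.2 ⟨hM, fun a b hab => ?_⟩
  by_contra! h
  have ha : a ∈ I := by_contra fun ha => h.1 (hsat a ha)
  have hb : b ∈ I := by_contra fun hb => h.2 (hsat b hb)
  exact hI ha hb hab.ne hab

theorem IsMatchingIn.two_mul_card_le [Finite V] (hM : IsMatchingIn G M) :
    2 * #M ≤ Nat.card V :=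
  hM.ncard_setOf_sat ▸ Set.ncard_le_card _

theorem IsMaximalMatchingIn.card_le_two_mul_add_one [Finite V] (hM : IsMaximalMatchingIn G M)
    {C : Set V} (hC : Gᶜ.IsVertexCover C) (hMC : CoversSet M C) :
    Nat.card V ≤ 2 * #M + 1 := by
  have hunsat : {v | Sat M v}ᶜ.ncard ≤ 1 := by
    refine (Set.ncard_le_one).2 fun a ha b hb => ?_
    by_contra hab
    have hadj : G.Adj a b := by
      by_contra hnadj
      rcases hC ((compl_adj G a b).2 ⟨hab, hnadj⟩) with h | h
      exacts [ha (hMC a h), hb (hMC b h)]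
    rcases (isMaximalMatchingIn_iff.1 hM).2 a b hadj with h | h
    exacts [ha h, hb h]
  have hsplit := Set.ncard_add_ncard_compl {v | Sat M v}
  rw [hM.1.ncard_setOf_sat] at hsplit
  omega

theorem equiSet_of_isVertexCover_compl [Finite V] {C : Set V} (hC : Gᶜ.IsVertexCover C) :
    EquiSet G C := by
  intro M M' hM hM' hMC hM'C
  have hlow := hM.card_le_two_mul_add_one hC hMC
  have hlow' := hM'.card_le_two_mul_add_one hC hM'C
  have hup := hM.1.two_mul_card_le
  have hup' := hM'.1.two_mul_card_le
  omega

theorem EquiSet.isVertexCover_compl [Finite V] (hExp : Expandable G)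
    (hPM : HasPMOn G Set.univ) {S : Set V} (hS : EquiSet G S) : Gᶜ.IsVertexCover S := by
  intro u v huv
  by_contra! h
  obtain ⟨hne, hnadj⟩ := (compl_adj G u v).1 huv
  obtain ⟨M₀, hM₀, hM₀in, hM₀sat⟩ := hPM
  obtain ⟨M₁, hM₁, hM₁in, hM₁sat⟩ := hExp u v hne hnadj
  have hM₀max : IsMaximalMatchingIn G M₀ :=
    isMaximalMatchingIn_iff.2 ⟨hM₀, fun a _ _ => Or.inl (hM₀sat a trivial)⟩
  have hM₁max : IsMaximalMatchingIn G M₁ :=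
    hM₁.isMaximalMatchingIn_of_isIndepSet (I := {u, v})
      (Set.pairwise_pair.2 fun _ => ⟨hnadj, fun h => hnadj h.symm⟩)
      (fun w hw => hM₁sat w ⟨trivial, hw⟩)
  have hM₁S : CoversSet M₁ S := fun w hw =>
    hM₁sat w ⟨trivial, by rintro (rfl | rfl); exacts [h.1 hw, h.2 hw]⟩
  have hcard := hS M₀ M₁ hM₀max hM₁max (fun w _ => hM₀sat w trivial) hM₁S
  have h₀ := hM₀.two_mul_card_eq_ncard hM₀in hM₀sat
  have h₁ := hM₁.two_mul_card_eq_ncard hM₁in hM₁sat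
  have hsplit := Set.ncard_sdiff_add_ncard_of_subset (Set.subset_univ {u, v})
  rw [Set.ncard_pair hne] at hsplit
  omega

theorem stmt_14 {V : Type*} [Fintype V] (G : SimpleGraph V)
    (hExp : Expandable G) (hPM : HasPMOn G (Set.univ : Set V)) :
    etaDefect G = tauNum Gᶜ := by
  have hequi : ∀ S : Set V, EquiSet G S ↔ Gᶜ.IsVertexCover S := fun S =>
    ⟨fun hS => hS.isVertexCover_compl hExp hPM, equiSet_of_isVertexCover_compl⟩
  unfold etaDefect tauNum
  congr 1
  ext n
  exact exists_congr fun S => and_congr_left fun _ => hequi S
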